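/- For every nonzero λ = (λ₁, …, λ_n) ∈ k^n, the homomorphism space Hom(B(λ), C) is one-dimensional; concretely, the k-vector space {(x, y) ∈ C₁ × C₂ : α_i(x) = λ_i · y for all i = 1, …, n} has dimension 1, being spanned by the pair (d(Σ_i λ_i c_i), Σ_i λ_i c_i). -/

import Mathlib

/-!
The canonical bristled `n`-Kronecker module `C = (C₁, C₂; α₁, …, α_n)`:
`C₂ = Fin n → k` with standard basis `c_i`, and `C₁ = Sym2 (Fin n) → k` with
standard basis `c_{ij}` indexed by unordered pairs `{i,j}`.
`α_r` is given by `(α_r x) i = x {i, r}`.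
For a nonzero `λ ∈ k^n`, the bristle `B(λ)` is the Kronecker module
`(k, k; λ₁, …, λ_n)`; a homomorphism `B(λ) → C` is a pair of linear maps
`(g₁ : k → C₁, g₂ : k → C₂)` with `α_i ∘ g₁ = g₂ ∘ (λ_i ·)` for all `i`.
Such a pair is determined by `(x, y) = (g₁ 1, g₂ 1)`, subject to
`α_i(x) = λ_i • y` for all `i`; so `Hom(B(λ), C)` is identified with the
subspace `{(x, y) ∈ C₁ × C₂ : α_i(x) = λ_i • y for all i}`.
-/

/-- The structure map `α_r : C₁ → C₂` of the canonical bristled module. -/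
def canAlpha (k : Type*) [Field k] (n : ℕ) (r : Fin n) :
    (Sym2 (Fin n) → k) →ₗ[k] (Fin n → k) where
  toFun x i := x (Sym2.mk i r)
  map_add' _ _ := rfl
  map_smul' _ _ := rfl

/-- `d(c) = Σ_{i ≤ j} λ_i λ_j c_{ij}` for `c = Σ_i λ_i c_i`. -/
def dvec {k : Type*} [Field k] {n : ℕ} (c : Fin n → k) : Sym2 (Fin n) → k :=
  Sym2.lift ⟨fun i j => c i * c j, fun i j => mul_comm (c i) (c j)⟩

/-- The space `Hom(B(λ), C) = {(x, y) ∈ C₁ × C₂ : α_i(x) = λ_i • y for all i}`. -/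
def homSpace {k : Type*} [Field k] {n : ℕ} (lam : Fin n → k) :
    Submodule k ((Sym2 (Fin n) → k) × (Fin n → k)) where
  carrier := {p | ∀ i, canAlpha k n i p.1 = lam i • p.2}
  add_mem' := by
    intro p q hp hq i
    simp [map_add, hp i, hq i, smul_add]
  zero_mem' := by
    intro i
    simp
  smul_mem' := by
    intro a p hp i
    simp only [Prod.smul_fst, Prod.smul_snd, map_smul, hp i]
    rw [smul_comm]

/-!
Writing out `α_i(x) = λ_i y` coordinatewise gives `x{i,j} = λ_i y_j` for all `i, j`.
Since `x{i,j} = x{j,i}`, this forces `λ_i y_j = λ_j y_i`, so `y = c λ` for some scalar `c`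
(read off at any coordinate where `λ` is nonzero), and then `x{i,j} = c λ_i λ_j`, i.e.
`(x, y) = c (d(λ), λ)`.
-/

theorem eq_smul_of_mul_comm {k ι : Type*} [Field k] {u v : ι → k}
    (huv : ∀ i j, u i * v j = u j * v i) {i₀ : ι} (hi₀ : u i₀ ≠ 0) :
    v = (v i₀ / u i₀) • u := by
  funext j
  rw [Pi.smul_apply, smul_eq_mul, div_mul_eq_mul_div, eq_div_iff hi₀, mul_comm, huv, mul_comm]

section CanonicalBristled

variable {k : Type*} [Field k] {n : ℕ}

theorem canAlpha_apply (r : Fin n) (x : Sym2 (Fin n) → k) (i : Fin n) :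
    canAlpha k n r x i = x s(i, r) :=
  rfl

@[simp]
theorem dvec_mk (c : Fin n → k) (i j : Fin n) : dvec c s(i, j) = c i * c j :=
  rfl

theorem mem_homSpace_iff {lam : Fin n → k} {p : (Sym2 (Fin n) → k) × (Fin n → k)} :
    p ∈ homSpace lam ↔ ∀ i j, p.1 s(j, i) = lam i * p.2 j := by
  simp only [homSpace, Submodule.mem_mk, AddSubmonoid.mem_mk, AddSubsemigroup.mem_mk,
    Set.mem_ofPred_eq, funext_iff, canAlpha_apply, Pi.smul_apply, smul_eq_mul]

theorem dvec_mem_homSpace (lam : Fin n → k) : (dvec lam, lam) ∈ homSpace lam :=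
  mem_homSpace_iff.2 fun i j => by simp [mul_comm]

theorem mul_snd_comm_of_mem_homSpace {lam : Fin n → k} {p : (Sym2 (Fin n) → k) × (Fin n → k)}
    (hp : p ∈ homSpace lam) (i j : Fin n) : lam i * p.2 j = lam j * p.2 i := by
  rw [← mem_homSpace_iff.1 hp, ← mem_homSpace_iff.1 hp, Sym2.eq_swap]

theorem eq_smul_dvec_of_mem_homSpace {lam : Fin n → k}
    {p : (Sym2 (Fin n) → k) × (Fin n → k)} (hp : p ∈ homSpace lam) {i₀ : Fin n}
    (hi₀ : lam i₀ ≠ 0) :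
    p = (p.2 i₀ / lam i₀) • (dvec lam, lam) := by
  have hy : p.2 = (p.2 i₀ / lam i₀) • lam :=
    eq_smul_of_mul_comm (mul_snd_comm_of_mem_homSpace hp) hi₀
  refine Prod.ext (funext fun s => ?_) hy
  induction s using Sym2.inductionOn with
  | hf i j =>
    rw [mem_homSpace_iff.1 hp j i, congrFun hy i]
    simp only [Prod.smul_fst, Pi.smul_apply, smul_eq_mul, dvec_mk]
    ring

theorem homSpace_eq_span {lam : Fin n → k} (hlam : lam ≠ 0) :
    homSpace lam = Submodule.span k {((dvec lam, lam) : (Sym2 (Fin n) → k) × (Fin n → k))} := by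
  obtain ⟨i₀, hi₀⟩ : ∃ i, lam i ≠ 0 := Function.ne_iff.mp hlam
  refine le_antisymm (fun p hp => ?_) ?_
  · exact Submodule.mem_span_singleton.2 ⟨_, (eq_smul_dvec_of_mem_homSpace hp hi₀).symm⟩
  · exact (Submodule.span_singleton_le_iff_mem _ _).2 (dvec_mem_homSpace lam)

end CanonicalBristled

theorem homSpace_from_bristle_is_one_dimensional_general
    {k : Type*} [Field k] {n : ℕ}
    (lam : Fin n → k) (hlam : lam ≠ 0) :
    Module.finrank k (homSpace lam) = 1 ∧
    homSpace lam = Submodule.span k {((dvec lam, lam) :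
      (Sym2 (Fin n) → k) × (Fin n → k))} := by
  have hne : ((dvec lam, lam) : (Sym2 (Fin n) → k) × (Fin n → k)) ≠ 0 :=
    fun h => hlam (congrArg Prod.snd h)
  refine ⟨?_, homSpace_eq_span hlam⟩
  rw [homSpace_eq_span hlam]
  exact finrank_span_singleton hne

/-- For every nonzero `λ ∈ k^n`, `Hom(B(λ), C)` is one-dimensional,
spanned by the pair `(d(Σ λ_i c_i), Σ λ_i c_i)`. -/
theorem homSpace_from_bristle_is_one_dimensional
    {k : Type*} [Field k] {n : ℕ} (hn : 1 ≤ n)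
    (lam : Fin n → k) (hlam : lam ≠ 0) :
    Module.finrank k (homSpace lam) = 1 ∧
    homSpace lam = Submodule.span k {((dvec lam, lam) :
      (Sym2 (Fin n) → k) × (Fin n → k))} :=
  homSpace_from_bristle_is_one_dimensional_general lam hlam
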